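/- For fixed κ ∈ R and t ∈ (0,1), define f^{(T)}_κ(x) = (−t^{1 + 2^{-4/3} T^{1/3}(κ−x)}; t²)_∞ / (−t^{2^{-4/3} T^{1/3}(κ−x)}; t²)_∞ − 1. Then f^{(T)}_κ(x) converges pointwise as T → ∞ to −1_{x > κ} for x ≠ κ. -/

import Mathlib

open Filter

/-- Infinite q-Pochhammer symbol `(a; q)_∞ = ∏_{k≥0} (1 - a qᵏ)`. -/
noncomputable def qPochInf (a q : ℝ) : ℝ := ∏' k : ℕ, (1 - a * q ^ k)

/-- `f^{(T)}_κ(x)` as in the GOE asymptotics of half-line ASEP. -/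
noncomputable def fT (t κ x T : ℝ) : ℝ :=
  qPochInf (-(t ^ (1 + (2 : ℝ) ^ (-(4 : ℝ) / 3) * T ^ ((1 : ℝ) / 3) * (κ - x)))) (t ^ 2) /
      qPochInf (-(t ^ ((2 : ℝ) ^ (-(4 : ℝ) / 3) * T ^ ((1 : ℝ) / 3) * (κ - x)))) (t ^ 2)
    - 1

/-!
Write `a = t ^ y` and `L(a) = log (-a; t²)_∞ = ∑ₖ log (1 + a t²ᵏ)`, so that
`f = exp (L(t a) - L(a)) - 1`. If `x < κ` then `a → 0⁺`, and `0 ≤ L(a) ≤ a / (1 - t²)` forces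
the ratio to `1`. If `x > κ` then `a → ∞`; the functional equation `L(a) = log (1 + a) + L(t² a)`
and the termwise inequality `(1 + t u)² ≤ (1 + u)(1 + t² u)` give
`L(t a) - L(a) ≤ -log (1 + a) / 2`, which forces the ratio to `0`.
-/

open Real Topology

noncomputable def qPochLog (q a : ℝ) : ℝ := ∑' k : ℕ, log (1 + a * q ^ k)

-- The paper's `p(y)`, in the variable `a = t ^ y`.
noncomputable def qPochRatio (t a : ℝ) : ℝ := qPochInf (-(t * a)) (t ^ 2) / qPochInf (-a) (t ^ 2)

section qPochLog

variable {q a : ℝ}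

lemma log_one_add_mul_pow_nonneg (hq : 0 ≤ q) (ha : 0 ≤ a) (k : ℕ) :
    0 ≤ log (1 + a * q ^ k) :=
  log_nonneg (le_add_of_nonneg_right (by positivity))

lemma log_one_add_mul_pow_le (hq : 0 ≤ q) (ha : 0 ≤ a) (k : ℕ) :
    log (1 + a * q ^ k) ≤ a * q ^ k := by
  have := log_le_sub_one_of_pos (x := 1 + a * q ^ k) (by positivity)
  linarith

lemma summable_log_one_add_mul_pow (hq0 : 0 ≤ q) (hq1 : q < 1) (ha : 0 ≤ a) :
    Summable fun k : ℕ => log (1 + a * q ^ k) :=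
  .of_nonneg_of_le (log_one_add_mul_pow_nonneg hq0 ha) (log_one_add_mul_pow_le hq0 ha)
    ((summable_geometric_of_lt_one hq0 hq1).mul_left a)

lemma qPochInf_neg_eq_exp_qPochLog (hq0 : 0 ≤ q) (hq1 : q < 1) (ha : 0 ≤ a) :
    qPochInf (-a) q = exp (qPochLog q a) := by
  rw [qPochLog, rexp_tsum_eq_tprod (fun k => by positivity)
    (summable_log_one_add_mul_pow hq0 hq1 ha), qPochInf]
  simp only [neg_mul, sub_neg_eq_add]

lemma qPochLog_nonneg (hq : 0 ≤ q) (ha : 0 ≤ a) : 0 ≤ qPochLog q a :=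
  tsum_nonneg (log_one_add_mul_pow_nonneg hq ha)

lemma qPochLog_le (hq0 : 0 ≤ q) (hq1 : q < 1) (ha : 0 ≤ a) : qPochLog q a ≤ a / (1 - q) :=
  calc qPochLog q a ≤ ∑' k : ℕ, a * q ^ k :=
        (summable_log_one_add_mul_pow hq0 hq1 ha).tsum_le_tsum (log_one_add_mul_pow_le hq0 ha)
          ((summable_geometric_of_lt_one hq0 hq1).mul_left a)
    _ = a / (1 - q) := by rw [tsum_mul_left, tsum_geometric_of_lt_one hq0 hq1, div_eq_mul_inv]

lemma tendsto_qPochLog_nhdsGE_zero (hq0 : 0 ≤ q) (hq1 : q < 1) :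
    Tendsto (qPochLog q) (𝓝[≥] 0) (𝓝 0) := by
  have hbound : Tendsto (fun a : ℝ => a / (1 - q)) (𝓝[≥] 0) (𝓝 0) := by
    simpa using ((continuous_id.div_const (1 - q)).tendsto 0).mono_left nhdsWithin_le_nhds
  refine tendsto_of_tendsto_of_tendsto_of_le_of_le' tendsto_const_nhds hbound ?_ ?_ <;>
    filter_upwards [self_mem_nhdsWithin] with a (ha : 0 ≤ a)
  exacts [qPochLog_nonneg hq0 ha, qPochLog_le hq0 hq1 ha]

lemma qPochLog_eq_log_add (hq0 : 0 ≤ q) (hq1 : q < 1) (ha : 0 ≤ a) :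
    qPochLog q a = log (1 + a) + qPochLog q (q * a) := by
  rw [qPochLog, (summable_log_one_add_mul_pow hq0 hq1 ha).tsum_eq_zero_add, qPochLog]
  simp only [pow_zero, mul_one, pow_succ, mul_comm q, mul_assoc]

lemma two_mul_log_one_add_mul_le {s u : ℝ} (hs : 0 ≤ s) (hu : 0 ≤ u) :
    2 * log (1 + s * u) ≤ log (1 + u) + log (1 + s ^ 2 * u) := by
  rw [← log_rpow (by positivity), ← log_mul (by positivity) (by positivity)]
  refine log_le_log (by positivity) ?_
  norm_num
  nlinarith [mul_nonneg hu (sq_nonneg (1 - s))]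

lemma two_mul_qPochLog_mul_le {s : ℝ} (hq0 : 0 ≤ q) (hq1 : q < 1) (hs : 0 ≤ s) (ha : 0 ≤ a) :
    2 * qPochLog q (s * a) ≤ qPochLog q a + qPochLog q (s ^ 2 * a) := by
  rw [qPochLog, qPochLog, qPochLog, ← tsum_mul_left,
    ← (summable_log_one_add_mul_pow hq0 hq1 ha).tsum_add
      (summable_log_one_add_mul_pow hq0 hq1 (by positivity))]
  refine ((summable_log_one_add_mul_pow hq0 hq1 (by positivity)).mul_left 2).tsum_le_tsum
    (fun k => ?_) ((summable_log_one_add_mul_pow hq0 hq1 ha).add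
      (summable_log_one_add_mul_pow hq0 hq1 (by positivity)))
  simpa only [mul_assoc] using two_mul_log_one_add_mul_le hs (by positivity : 0 ≤ a * q ^ k)

end qPochLog

section qPochRatio

variable {t a : ℝ}

lemma qPochRatio_eq_exp (ht0 : 0 ≤ t) (ht1 : t < 1) (ha : 0 ≤ a) :
    qPochRatio t a = exp (qPochLog (t ^ 2) (t * a) - qPochLog (t ^ 2) a) := by
  have hq1 : t ^ 2 < 1 := by nlinarith
  rw [qPochRatio, qPochInf_neg_eq_exp_qPochLog (by positivity) hq1 (by positivity),
    qPochInf_neg_eq_exp_qPochLog (by positivity) hq1 ha, exp_sub]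

lemma qPochLog_mul_sub_le (ht0 : 0 ≤ t) (ht1 : t < 1) (ha : 0 ≤ a) :
    qPochLog (t ^ 2) (t * a) - qPochLog (t ^ 2) a ≤ -(log (1 + a) / 2) := by
  have hq1 : t ^ 2 < 1 := by nlinarith
  have hconvex := two_mul_qPochLog_mul_le (by positivity) hq1 ht0 ha
  have hshift := qPochLog_eq_log_add (by positivity) hq1 ha
  linarith

lemma tendsto_qPochRatio_atTop (ht0 : 0 ≤ t) (ht1 : t < 1) :
    Tendsto (qPochRatio t) atTop (𝓝 0) := by
  have hlog : Tendsto (fun a : ℝ => log (1 + a) / 2) atTop atTop :=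
    (tendsto_log_atTop.comp (tendsto_atTop_add_const_left _ 1 tendsto_id)).atTop_div_const
      two_pos
  refine squeeze_zero' ?_ ?_ (tendsto_exp_neg_atTop_nhds_zero.comp hlog) <;>
    filter_upwards [eventually_ge_atTop 0] with a ha <;>
    rw [qPochRatio_eq_exp ht0 ht1 ha]
  exacts [(exp_pos _).le, exp_le_exp.2 (qPochLog_mul_sub_le ht0 ht1 ha)]

lemma tendsto_qPochRatio_nhdsGE_zero (ht0 : 0 ≤ t) (ht1 : t < 1) :
    Tendsto (qPochRatio t) (𝓝[≥] 0) (𝓝 1) := by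
  have hq1 : t ^ 2 < 1 := by nlinarith
  have hL := tendsto_qPochLog_nhdsGE_zero (by positivity) hq1
  have hmul : Tendsto (t * ·) (𝓝[≥] 0) (𝓝[≥] 0) :=
    tendsto_nhdsWithin_iff.2
      ⟨by simpa using ((continuous_const_mul t).tendsto 0).mono_left nhdsWithin_le_nhds,
        eventually_nhdsWithin_of_forall fun a (ha : 0 ≤ a) => mul_nonneg ht0 ha⟩
  have hD := (hL.comp hmul).sub hL
  rw [sub_zero] at hD
  have hexp := (continuous_exp.tendsto 0).comp hD
  rw [exp_zero] at hexp
  refine hexp.congr' ?_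
  filter_upwards [self_mem_nhdsWithin] with a (ha : 0 ≤ a)
  exact (qPochRatio_eq_exp ht0 ht1 ha).symm

end qPochRatio

lemma fT_eq_qPochRatio {t : ℝ} (ht : 0 < t) (κ x T : ℝ) :
    fT t κ x T =
      qPochRatio t (t ^ ((2 : ℝ) ^ (-(4 : ℝ) / 3) * T ^ ((1 : ℝ) / 3) * (κ - x))) - 1 := by
  rw [fT, qPochRatio, rpow_add ht, rpow_one]

/-- For fixed `κ` and `t ∈ (0,1)`, `f^{(T)}_κ(x) → −1_{x > κ}` pointwise as `T → ∞`,
for `x ≠ κ`. -/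
theorem fT_tendsto_indicator (t : ℝ) (ht0 : 0 < t) (ht1 : t < 1) (κ x : ℝ)
    (hx : x ≠ κ) :
    Tendsto (fun T : ℝ => fT t κ x T) atTop
      (nhds (if κ < x then (-1 : ℝ) else 0)) := by
  simp only [fT_eq_qPochRatio ht0]
  have hscale : Tendsto (fun T : ℝ => (2 : ℝ) ^ (-(4 : ℝ) / 3) * T ^ ((1 : ℝ) / 3)) atTop atTop :=
    (tendsto_rpow_atTop (by norm_num)).const_mul_atTop (by positivity)
  rcases hx.lt_or_gt with hlt | hgt
  · have hy := hscale.atTop_mul_const (sub_pos.2 hlt)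
    have ha : Tendsto (fun T : ℝ => t ^ ((2 : ℝ) ^ (-(4 : ℝ) / 3) * T ^ ((1 : ℝ) / 3) * (κ - x)))
        atTop (𝓝[≥] 0) :=
      tendsto_nhdsWithin_iff.2 ⟨(tendsto_rpow_atTop_of_base_lt_one t (by linarith) ht1).comp hy,
        Eventually.of_forall fun T => (rpow_pos_of_pos ht0 _).le⟩
    simpa [if_neg hlt.not_gt] using
      ((tendsto_qPochRatio_nhdsGE_zero ht0.le ht1).comp ha).sub_const 1
  · have hy := hscale.atTop_mul_const_of_neg (sub_neg.2 hgt)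
    simpa [if_pos hgt] using
      ((tendsto_qPochRatio_atTop ht0.le ht1).comp
        ((tendsto_rpow_atBot_of_base_lt_one t ht0 ht1).comp hy)).sub_const 1
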